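/- arXiv:1812.05337 — 7 statements merged into one kernel-verified Lean document; each statement's English description precedes it below -/
import Mathlib

section
/- Let M_n = [[0, c_1],[-1,1]] ⋯ [[0, c_n],[-1,1]]. Then det M_n = c_1 c_2 ⋯ c_n, and tr M_n = Σ_{I ⊆ [n] cyclically sparse} (-1)^{|I|} ∏_{k∈I} c_k, where a subset I of {1,...,n} is cyclically sparse if it contains no two cyclically consecutive indices (with n and 1 considered consecutive). -/
/-- The monodromy product `M_n = [[0,c₁],[-1,1]] ⋯ [[0,cₙ],[-1,1]]`. -/
noncomputable def M (c : ℤ → ℂ) : ℕ → Matrix (Fin 2) (Fin 2) ℂ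
  | 0 => 1
  | (n + 1) => M c n * !![0, c ((n : ℤ) + 1); -1, 1]


open Finset

noncomputable def Fs (c : ℤ → ℂ) (i j : ℕ) : ℂ :=
  ∑ I ∈ (Finset.Icc i j).powerset.filter (fun I => ∀ k ∈ I, k + 1 ∉ I),
    (-1 : ℂ) ^ I.card * ∏ k ∈ I, c (k : ℤ)

lemma sum_filter_powerset_insert (a : ℕ) (s : Finset ℕ) (ha : a ∉ s)
    (p : Finset ℕ → Prop) [DecidablePred p] (f : Finset ℕ → ℂ) :
    ∑ I ∈ (insert a s).powerset.filter p, f I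
      = (∑ I ∈ s.powerset.filter p, f I)
        + ∑ I ∈ s.powerset.filter (fun I => p (insert a I)), f (insert a I) := by
  rw [Finset.sum_filter, Finset.sum_filter, Finset.sum_filter,
    Finset.sum_powerset_insert ha]

lemma Fs_of_lt (c : ℤ → ℂ) {i j : ℕ} (h : j < i) : Fs c i j = 1 := by
  unfold Fs
  rw [Finset.Icc_eq_empty (by omega)]
  simp [Finset.filter_singleton]

lemma Fs_self (c : ℤ → ℂ) (i : ℕ) : Fs c i i = 1 - c i := by
  unfold Fs
  rw [Finset.Icc_self, show ({i} : Finset ℕ) = insert i ∅ by rfl,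
    sum_filter_powerset_insert i ∅ (by simp)]
  simp [Finset.filter_singleton]
  ring


lemma Fs_rec (c : ℤ → ℂ) {i j : ℕ} (h : i ≤ j + 2) :
    Fs c i (j + 2) = Fs c i (j + 1) - c (j + 2 : ℕ) * Fs c i j := by
  rcases eq_or_lt_of_le h with h | h
  · rw [← h, Fs_self, Fs_of_lt c (by omega), Fs_of_lt c (by omega)]
    push_cast; ring
  · have h1 : i ≤ j + 1 := by omega
    have hicc : Finset.Icc i (j + 2) = insert (j + 2) (Finset.Icc i (j + 1)) := by
      ext x; simp only [Finset.mem_Icc, Finset.mem_insert]; omega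
    have hins : (j + 2) ∉ Finset.Icc i (j + 1) := by simp
    unfold Fs
    rw [hicc, sum_filter_powerset_insert _ _ hins]
    have hset : (Finset.Icc i (j + 1)).powerset.filter
        (fun I => ∀ k ∈ insert (j + 2) I, k + 1 ∉ insert (j + 2) I)
        = (Finset.Icc i j).powerset.filter (fun I => ∀ k ∈ I, k + 1 ∉ I) := by
      ext I
      simp only [Finset.mem_filter, Finset.mem_powerset]
      constructor
      · rintro ⟨hsub, hsp⟩
        have hnotmem : j + 1 ∉ I := by
          intro hmem
          exact hsp (j + 1) (Finset.mem_insert_of_mem hmem) (Finset.mem_insert_self _ _)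
        refine ⟨fun k hk => ?_, fun k hk hk1 => ?_⟩
        · have := hsub hk
          simp only [Finset.mem_Icc] at this ⊢
          have : k ≠ j + 1 := fun he => hnotmem (he ▸ hk)
          omega
        · exact hsp k (Finset.mem_insert_of_mem hk)
            (Finset.mem_insert_of_mem hk1)
      · rintro ⟨hsub, hsp⟩
        have hbd : ∀ k ∈ I, k ≤ j := fun k hk => (Finset.mem_Icc.1 (hsub hk)).2
        refine ⟨fun k hk => Finset.mem_Icc.2 ⟨(Finset.mem_Icc.1 (hsub hk)).1,
          by have := hbd k hk; omega⟩, fun k hk hk1 => ?_⟩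
        rcases Finset.mem_insert.1 hk with rfl | hk
        · rcases Finset.mem_insert.1 hk1 with h' | h'
          · omega
          · have := hbd _ h'; omega
        · rcases Finset.mem_insert.1 hk1 with h' | h'
          · have := hbd _ hk; omega
          · exact hsp k hk h'
    rw [hset, sub_eq_add_neg]
    congr 1
    rw [Finset.mul_sum, ← Finset.sum_neg_distrib]
    apply Finset.sum_congr rfl
    intro I hI
    simp only [Finset.mem_filter, Finset.mem_powerset] at hI
    have hni : (j + 2) ∉ I := by
      intro hmem
      have := (Finset.mem_Icc.1 (hI.1 hmem)).2; omega
    rw [Finset.card_insert_of_notMem hni, Finset.prod_insert hni]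
    push_cast
    ring

lemma M_entries (c : ℤ → ℂ) (m : ℕ) :
    M c (m + 2) = !![-(c 1) * Fs c 3 (m + 1), c 1 * Fs c 3 (m + 2);
                     -(Fs c 2 (m + 1)), Fs c 2 (m + 2)] := by
  induction m with
  | zero =>
      show (M c 0 * _) * _ = _
      rw [show M c 0 = (1 : Matrix (Fin 2) (Fin 2) ℂ) from rfl, one_mul,
        Matrix.mul_fin_two]
      rw [Fs_of_lt c (by omega), Fs_of_lt c (by omega), Fs_of_lt c (by omega),
        Fs_self]
      norm_num [sub_eq_neg_add]
  | succ m ih =>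
      show M c (m + 2) * _ = _
      rw [ih, Matrix.mul_fin_two]
      have h1 : Fs c 3 (m + 3) = Fs c 3 (m + 2) - c ((m + 3 : ℕ)) * Fs c 3 (m + 1) :=
        Fs_rec c (by omega)
      have h2 : Fs c 2 (m + 3) = Fs c 2 (m + 2) - c ((m + 3 : ℕ)) * Fs c 2 (m + 1) :=
        Fs_rec c (by omega)
      have hc : ((m + 2 : ℕ) : ℤ) + 1 = ((m + 3 : ℕ) : ℤ) := by push_cast; ring
      rw [hc, h1, h2]
      congr 1 <;> push_cast <;> ring


lemma cyc_sum (c : ℤ → ℂ) (m : ℕ) :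
    ∑ I ∈ (Finset.Icc 1 (m + 2)).powerset.filter
        (fun I => ∀ k ∈ I, (k % (m + 2) + 1) ∉ I),
      (-1 : ℂ) ^ I.card * ∏ k ∈ I, c (k : ℤ)
    = Fs c 2 (m + 2) - c 1 * Fs c 3 (m + 1) := by
  have hicc : Finset.Icc 1 (m + 2) = insert 1 (Finset.Icc 2 (m + 2)) := by
    ext x; simp only [Finset.mem_Icc, Finset.mem_insert]; omega
  rw [hicc, sum_filter_powerset_insert 1 _ (by simp)]
  have hA : (Finset.Icc 2 (m + 2)).powerset.filter
      (fun I => ∀ k ∈ I, (k % (m + 2) + 1) ∉ I)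
      = (Finset.Icc 2 (m + 2)).powerset.filter (fun I => ∀ k ∈ I, k + 1 ∉ I) := by
    ext I
    simp only [Finset.mem_filter, Finset.mem_powerset, and_congr_right_iff]
    intro hsub
    have hbd : ∀ k ∈ I, 2 ≤ k ∧ k ≤ m + 2 := fun k hk => Finset.mem_Icc.1 (hsub hk)
    constructor
    · intro hcyc k hk hk1
      rcases lt_or_eq_of_le (hbd k hk).2 with hlt | heq
      · have hm : k % (m + 2) = k := Nat.mod_eq_of_lt hlt
        exact hcyc k hk (by rw [hm]; exact hk1)
      · have := (hbd _ hk1).2; omega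
    · intro hsp k hk hk1
      rcases lt_or_eq_of_le (hbd k hk).2 with hlt | heq
      · have hm : k % (m + 2) = k := Nat.mod_eq_of_lt hlt
        rw [hm] at hk1
        exact hsp k hk hk1
      · subst heq
        rw [Nat.mod_self] at hk1
        have := (hbd _ hk1).1; omega
  have hB : (Finset.Icc 2 (m + 2)).powerset.filter
      (fun I => ∀ k ∈ insert 1 I, (k % (m + 2) + 1) ∉ insert 1 I)
      = (Finset.Icc 3 (m + 1)).powerset.filter (fun I => ∀ k ∈ I, k + 1 ∉ I) := by
    ext I
    simp only [Finset.mem_filter, Finset.mem_powerset]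
    constructor
    · rintro ⟨hsub, hcyc⟩
      have hbd : ∀ k ∈ I, 2 ≤ k ∧ k ≤ m + 2 := fun k hk => Finset.mem_Icc.1 (hsub hk)
      have h1m : (1 : ℕ) % (m + 2) = 1 := Nat.mod_eq_of_lt (by omega)
      have h2 : 2 ∉ I := by
        intro h2
        exact hcyc 1 (Finset.mem_insert_self _ _)
          (by rw [h1m]; exact Finset.mem_insert_of_mem h2)
      have hn : m + 2 ∉ I := by
        intro hn
        exact hcyc (m + 2) (Finset.mem_insert_of_mem hn)
          (by rw [Nat.mod_self]; exact Finset.mem_insert_self _ _)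
      refine ⟨fun k hk => ?_, fun k hk hk1 => ?_⟩
      · have h := hbd k hk
        have : k ≠ 2 := fun he => h2 (he ▸ hk)
        have : k ≠ m + 2 := fun he => hn (he ▸ hk)
        simp only [Finset.mem_Icc]; omega
      · have h := hbd k hk
        have hkne : k ≠ m + 2 := fun he => hn (he ▸ hk)
        have hm : k % (m + 2) = k := Nat.mod_eq_of_lt (by omega)
        exact hcyc k (Finset.mem_insert_of_mem hk)
          (by rw [hm]; exact Finset.mem_insert_of_mem hk1)
    · rintro ⟨hsub, hsp⟩
      have hbd : ∀ k ∈ I, 3 ≤ k ∧ k ≤ m + 1 := fun k hk => Finset.mem_Icc.1 (hsub hk)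
      refine ⟨fun k hk => Finset.mem_Icc.2 (by have := hbd k hk; omega),
        fun k hk hk1 => ?_⟩
      rcases Finset.mem_insert.1 hk with rfl | hk
      · rw [Nat.mod_eq_of_lt (by omega)] at hk1
        rcases Finset.mem_insert.1 hk1 with h' | h'
        · omega
        · have := (hbd _ h').1; omega
      · have hklt : k < m + 2 := by have := hbd k hk; omega
        rw [Nat.mod_eq_of_lt hklt] at hk1
        rcases Finset.mem_insert.1 hk1 with h' | h'
        · have := (hbd _ hk).1; omega
        · exact hsp k hk h'
  rw [hA, hB, sub_eq_add_neg]
  congr 1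
  unfold Fs
  rw [Finset.mul_sum, ← Finset.sum_neg_distrib]
  apply Finset.sum_congr rfl
  intro I hI
  simp only [Finset.mem_filter, Finset.mem_powerset] at hI
  have h1I : (1 : ℕ) ∉ I := by
    intro hmem
    have := (Finset.mem_Icc.1 (hI.1 hmem)).1; omega
  rw [Finset.card_insert_of_notMem h1I, Finset.prod_insert h1I]
  push_cast
  ring


lemma M_det (c : ℤ → ℂ) (n : ℕ) : (M c n).det = ∏ k ∈ Finset.Icc 1 n, c (k : ℤ) := by
  induction n with
  | zero => simp [M]
  | succ n ih =>
      show ((M c n) * _).det = _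
      rw [Matrix.det_mul, ih, Matrix.det_fin_two_of]
      rw [Finset.prod_Icc_succ_top (by omega : 1 ≤ n + 1)]
      push_cast
      ring

/-- `det M_n = c₁ ⋯ cₙ` and `tr M_n = Σ_{I cyclically sparse} (-1)^{|I|} c_I`,
where `I` ranges over subsets of `{1, …, n}` containing no two cyclically
consecutive indices (the cyclic successor of `k` being `k % n + 1`). -/
theorem stmt5 (c : ℤ → ℂ) (n : ℕ) (hn : 1 ≤ n) :
    (M c n).det = ∏ k ∈ Finset.Icc 1 n, c (k : ℤ) ∧
    (M c n).trace =
      ∑ I ∈ (Finset.Icc 1 n).powerset.filter (fun I => ∀ k ∈ I, (k % n + 1) ∉ I),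
        (-1 : ℂ) ^ I.card * ∏ k ∈ I, c (k : ℤ) := by
  refine ⟨M_det c n, ?_⟩
  match n, hn with
  | 1, _ =>
      have h1 : M c 1 = !![0, c 1; -1, 1] := by
        show M c 0 * _ = _
        rw [show M c 0 = (1 : Matrix (Fin 2) (Fin 2) ℂ) from rfl, one_mul]
        norm_num
      rw [h1]
      have hicc : Finset.Icc 1 1 = {1} := Finset.Icc_self 1
      rw [hicc, show ({1} : Finset ℕ) = insert 1 ∅ from rfl,
        sum_filter_powerset_insert 1 ∅ (by simp)]
      simp [Matrix.trace, Matrix.diag, Fin.sum_univ_two, Finset.filter_singleton]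
  | (m + 2), _ =>
      rw [M_entries c m, cyc_sum c m]
      simp [Matrix.trace, Matrix.diag, Fin.sum_univ_two, Finset.filter_singleton]
      ring
end

section
/- Suppose the n-periodic sequence (c_i) satisfies D_{i, n-3+i} = 0 for all i, where D are the continuants defined by D_{i,i-2} = D_{i,i-1} = 1 and D_{i,j} = D_{i,j-1} - c_j D_{i,j-2}. Then D_{2,n} + c_1 D_{3,n-1} = 0; consequently the matrix M_n = [[0,c_1],[-1,1]] ⋯ [[0,c_n],[-1,1]] = [[-c_1 D_{3,n-1}, c_1 D_{3,n}],[-D_{2,n-1}, D_{2,n}]] is a scalar multiple of the identity. -/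
/-- The continuant `D_{i,j}` of the sequence `c`, encoded by length:
`D c i ℓ` corresponds to `D_{i,j}` with `ℓ = j - i + 3`. -/
noncomputable def D (c : ℤ → ℂ) (i : ℤ) : ℕ → ℂ
  | 0 => 0
  | 1 => 1
  | 2 => 1
  | (m + 3) => D c i (m + 2) - c (i + m) * D c i (m + 1)

/-- step lemma valid from length 2 onward for i = 3 -/
lemma D3_step (c : ℤ → ℂ) (k : ℕ) :
    D c 3 (k+2) = D c 3 (k+1) - c ((k:ℤ)+2) * D c 3 k := by
  match k with
  | 0 => simp [D]
  | (j+1) =>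
    show D c 3 (j+3) = D c 3 (j+2) - c ((j:ℤ)+1+2) * D c 3 (j+1)
    rw [show D c 3 (j+3) = D c 3 (j+2) - c (3 + (j:ℤ)) * D c 3 (j+1) from rfl]
    ring_nf

lemma D2_step (c : ℤ → ℂ) (j : ℕ) :
    D c 2 (j+3) = D c 2 (j+2) - c ((j:ℤ)+2) * D c 2 (j+1) := by
  rw [show D c 2 (j+3) = D c 2 (j+2) - c (2 + (j:ℤ)) * D c 2 (j+1) from rfl]
  ring_nf

/-- left recursion -/
lemma D_left (c : ℤ → ℂ) (i : ℤ) : ∀ ℓ : ℕ,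
    D c i (ℓ+2) = D c (i+1) (ℓ+1) - c i * D c (i+2) ℓ := by
  intro ℓ
  induction ℓ using Nat.strong_induction_on with
  | _ ℓ ih =>
    match ℓ with
    | 0 => simp [D]
    | 1 => simp [D]
    | 2 =>
      show D c i 4 = D c (i+1) 3 - c i * D c (i+2) 2
      rw [show D c i 4 = D c i 3 - c (i + 1) * D c i 2 by norm_num [D],
          show D c (i+1) 3 = D c (i+1) 2 - c (i+1+0) * D c (i+1) 1 from rfl]
      simp [D]; ring
    | (k+3) =>
      have h1 := ih (k+2) (by omega)
      have h2 := ih (k+1) (by omega)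
      show D c i (k+5) = D c (i+1) (k+4) - c i * D c (i+2) (k+3)
      rw [show D c i (k+5) = D c i (k+4) - c (i + ((k:ℤ)+2)) * D c i (k+3) by
            rw [show (k+5) = (k+2)+3 from rfl]; norm_num [D],
          show D c (i+1) (k+4) = D c (i+1) (k+3) - c (i+1 + ((k:ℤ)+1)) * D c (i+1) (k+2) by
            rw [show (k+4) = (k+1)+3 from rfl]; norm_num [D],
          show D c (i+2) (k+3) = D c (i+2) (k+2) - c (i+2 + (k:ℤ)) * D c (i+2) (k+1) from rfl,
          h1, h2]
      have : i + ((k:ℤ)+2) = i+1+((k:ℤ)+1) := by ring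
      rw [this]
      have : i+2+(k:ℤ) = i+1+((k:ℤ)+1) := by ring
      rw [this]
      ring

lemma M_formula (c : ℤ → ℂ) : ∀ k : ℕ,
    M c (k+1) = !![-(c 1 * D c 3 k), c 1 * D c 3 (k+1); -D c 2 (k+1), D c 2 (k+2)] := by
  intro k
  induction k with
  | zero =>
    show M c 0 * !![0, c ((0:ℕ)+1); -1, 1] = _
    simp [M, D, Matrix.one_mul]
  | succ j ih =>
    show M c (j+1) * !![0, c (((j+1:ℕ):ℤ)+1); -1, 1] = _
    rw [ih, Matrix.mul_fin_two]
    have h3 := D3_step c j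
    have h2 := D2_step c j
    have hc : (((j+1:ℕ):ℤ)+1) = ((j:ℤ)+2) := by push_cast; ring
    rw [hc]
    ext a b
    fin_cases a <;> fin_cases b <;>
      simp [show j+1+2 = j+3 from rfl, show j+1+1 = j+2 from rfl] <;>
      first
        | linear_combination h3
        | linear_combination -h3
        | linear_combination c 1 * h3
        | linear_combination -(c 1) * h3
        | linear_combination h2
        | linear_combination -h2
  
/-- If the `n`-periodic sequence `c` satisfies `D_{i,n-3+i} = 0` for all `i`
(in the length encoding, `D c i n = 0`), then `D_{2,n} + c₁ D_{3,n-1} = 0`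
and the monodromy `M_n` is a scalar multiple of the identity. -/
theorem stmt6 (c : ℤ → ℂ) (n : ℕ) (hn : 4 ≤ n)
    (hper : ∀ i : ℤ, c (i + n) = c i)
    (hD : ∀ i : ℤ, D c i n = 0) :
    D c 2 (n + 1) + c 1 * D c 3 (n - 1) = 0 ∧
    ∃ t : ℂ, M c n = t • (1 : Matrix (Fin 2) (Fin 2) ℂ) := by
  obtain ⟨m, rfl⟩ : ∃ m, n = m + 4 := ⟨n - 4, by omega⟩
  have h3 : D c 3 (m+3) = c ((m:ℤ)+4) * D c 3 (m+2) := by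
    have := hD 3
    rw [show (m+4) = (m+1)+3 from rfl, show D c 3 ((m+1)+3) = D c 3 (m+3) - c (3 + ((m:ℤ)+1)) * D c 3 (m+2) by norm_num [D]] at this
    have hc : (3 + ((m:ℤ)+1)) = (m:ℤ)+4 := by ring
    rw [hc] at this
    linear_combination this
  have h1 : D c 2 (m+3) = c 1 * D c 3 (m+2) := by
    have := hD 1
    rw [show (m+4:ℕ) = (m+2)+2 from rfl, D_left c 1 (m+2)] at this
    norm_num at this
    linear_combination this
  have h2 : D c 2 (m+4) = 0 := hD 2
  have h5 : D c 2 (m+5) = - c ((m:ℤ)+4) * D c 2 (m+3) := by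
    have h := D2_step c (m+2)
    push_cast at h
    rw [show ((m:ℤ)+2+2) = (m:ℤ)+4 by ring, h2] at h
    linear_combination h
  have key : -(c 1 * D c 3 (m+3)) = D c 2 (m+5) := by
    rw [h5, h3, h1]; ring
  have hsub : m+4-1 = m+3 := by omega
  constructor
  · rw [hsub]
    show D c 2 (m+5) + c 1 * D c 3 (m+3) = 0
    linear_combination -key
  · refine ⟨D c 2 (m+5), ?_⟩
    have hM := M_formula c (m+3)
    rw [show (m+4:ℕ) = (m+3)+1 from rfl, hM]
    have hA : D c 3 (m+4) = 0 := hD 3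
    ext a b
    fin_cases a <;> fin_cases b <;>
      simp [show m+3+1 = m+4 from rfl, show m+3+2 = m+5 from rfl, h2, hA, key]
end

section
/- Let (c_i) be an n-periodic sequence satisfying D_{i, n-3+i} = 0 for all i. Then for all i, D_{i,n-1+i} = D_{i,n-2+i}, and this common value equals (1/2) Σ_{I cyclically sparse} (-1)^{|I|} c_I. -/
lemma D_add_three (c : ℤ → ℂ) (i : ℤ) (m : ℕ) :
    D c i (m + 3) = D c i (m + 2) - c (i + m) * D c i (m + 1) := rfl

lemma D_add_two_eq_left (c : ℤ → ℂ) : ∀ (k : ℕ) (i : ℤ),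
    D c i (k + 2) = D c (i + 1) (k + 1) - c i * D c (i + 2) k
  | 0, i => by simp [D]
  | 1, i => by simp [D]
  | 2, i => by simp [D]; ring
  | k + 3, i => by
    rw [D_add_three c i (k + 2), D_add_three c (i + 1) (k + 1), D_add_three c (i + 2) k,
      D_add_two_eq_left c (k + 2) i, D_add_two_eq_left c (k + 1) i]
    push_cast
    ring_nf

/-- `I` contains no two `σ`-consecutive indices `k, σ k`. Linear sparseness is `σ = Nat.succ`;
cyclic sparseness on `{1, …, n}` is `σ k = k % n + 1`. -/
def IsSparse (σ : ℕ → ℕ) (I : Finset ℕ) : Prop := ∀ k ∈ I, σ k ∉ I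

instance (σ : ℕ → ℕ) : DecidablePred (IsSparse σ) :=
  fun I => inferInstanceAs (Decidable (∀ k ∈ I, σ k ∉ I))

noncomputable def sparseSum (σ : ℕ → ℕ) (c : ℤ → ℂ) (s : Finset ℕ) : ℂ :=
  ∑ I ∈ s.powerset.filter (IsSparse σ), (-1 : ℂ) ^ I.card * ∏ k ∈ I, c k

@[simp]
lemma sparseSum_empty (σ : ℕ → ℕ) (c : ℤ → ℂ) : sparseSum σ c ∅ = 1 := by
  simp [sparseSum, IsSparse, Finset.filter_singleton]

lemma isSparse_insert_iff {σ : ℕ → ℕ} {x : ℕ} {I : Finset ℕ} :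
    IsSparse σ (insert x I) ↔
      σ x ≠ x ∧ σ x ∉ I ∧ (∀ k ∈ I, σ k ≠ x) ∧ IsSparse σ I := by
  unfold IsSparse
  rw [Finset.forall_mem_insert]
  simp only [Finset.mem_insert, not_or]
  constructor
  · rintro ⟨hx, hI⟩
    exact ⟨hx.1, hx.2, fun k hk => (hI k hk).1, fun k hk => (hI k hk).2⟩
  · rintro ⟨hx, hxI, hIx, hI⟩
    exact ⟨⟨hx, hxI⟩, fun k hk => ⟨hIx k hk, hI k hk⟩⟩

lemma sparseSum_congr {σ τ : ℕ → ℕ} (c : ℤ → ℂ) {s : Finset ℕ} (h : ∀ k ∈ s, σ k = τ k) :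
    sparseSum σ c s = sparseSum τ c s := by
  refine Finset.sum_congr (Finset.filter_congr fun I hI => ?_) fun _ _ => rfl
  have hIs := Finset.mem_powerset.1 hI
  exact forall₂_congr fun k hk => by rw [h k (hIs hk)]

lemma sparseSum_insert {σ : ℕ → ℕ} (c : ℤ → ℂ) {s t : Finset ℕ} {x : ℕ}
    (hx : x ∉ s) (ht : t ⊆ s)
    (hsparse : ∀ I ⊆ s, IsSparse σ (insert x I) ↔ I ⊆ t ∧ IsSparse σ I) :
    sparseSum σ c (insert x s) = sparseSum σ c s - c x * sparseSum σ c t := by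
  have hfilter : s.powerset.filter (fun I => IsSparse σ (insert x I)) =
      t.powerset.filter (IsSparse σ) := by
    ext I
    simp only [Finset.mem_filter, Finset.mem_powerset]
    exact ⟨fun ⟨hIs, hI⟩ => (hsparse I hIs).1 hI,
      fun ⟨hIt, hI⟩ => ⟨hIt.trans ht, (hsparse I (hIt.trans ht)).2 ⟨hIt, hI⟩⟩⟩
  rw [sparseSum, Finset.sum_filter, Finset.sum_powerset_insert hx, ← Finset.sum_filter,
    ← Finset.sum_filter (p := fun I => IsSparse σ (insert x I)), hfilter, sparseSum,
    sparseSum, sub_eq_add_neg, Finset.mul_sum, ← Finset.sum_neg_distrib]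
  refine congrArg _ (Finset.sum_congr rfl fun I hI => ?_)
  have hxI : x ∉ I := fun h =>
    hx ((Finset.mem_powerset.1 (Finset.mem_filter.1 hI).1).trans ht h)
  rw [Finset.card_insert_of_notMem hxI, Finset.prod_insert hxI, pow_succ]
  ring

lemma D_eq_sparseSum (c : ℤ → ℂ) (a : ℕ) :
    ∀ ℓ : ℕ, D c a (ℓ + 2) = sparseSum Nat.succ c (Finset.Ico a (ℓ + a))
  | 0 => by simp [D]
  | 1 => by
    rw [show Finset.Ico a (1 + a) = insert a ∅ by simp [add_comm],
      sparseSum_insert c (Finset.notMem_empty a) subset_rfl]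
    · simp [D]
    · intro I hI
      simp [Finset.subset_empty.1 hI, IsSparse]
  | ℓ + 2 => by
    have hs : Finset.Ico a (ℓ + 2 + a) = insert (ℓ + 1 + a) (Finset.Ico a (ℓ + 1 + a)) := by
      ext k; simp; omega
    rw [hs, sparseSum_insert c (t := Finset.Ico a (ℓ + a)) (by rw [Finset.mem_Ico]; omega)
      (Finset.Ico_subset_Ico_right (by omega)),
      ← D_eq_sparseSum c a (ℓ + 1), ← D_eq_sparseSum c a ℓ, D_add_three]
    · push_cast; ring_nf
    · intro I hI
      have hbound : ∀ k ∈ I, a ≤ k ∧ k < ℓ + 1 + a := fun k hk => Finset.mem_Ico.1 (hI hk)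
      rw [isSparse_insert_iff]
      constructor
      · rintro ⟨-, -, hx, hsp⟩
        refine ⟨fun k hk => ?_, hsp⟩
        have := hbound k hk
        have := hx k hk
        rw [Finset.mem_Ico]
        omega
      · rintro ⟨ht, hsp⟩
        refine ⟨by omega, fun h => by have := hbound _ h; omega, fun k hk => ?_, hsp⟩
        have := Finset.mem_Ico.1 (ht hk)
        omega

lemma sparseSum_cyclic_eq (c : ℤ → ℂ) (n : ℕ) :
    sparseSum (fun k => k % (n + 3) + 1) c (Finset.Icc 1 (n + 3)) =
      D c 1 (n + 4) - c (n + 3) * D c 2 (n + 2) := by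
  have hsub : Finset.Ico 2 (n + 2) ⊆ Finset.Ico 1 (n + 3) :=
    Finset.Ico_subset_Ico (by omega) (by omega)
  have hmod : ∀ k ∈ Finset.Ico 1 (n + 3), k % (n + 3) + 1 = k.succ := fun k hk => by
    rw [Nat.mod_eq_of_lt (Finset.mem_Ico.1 hk).2]
  rw [← Finset.Ico_insert_right (by omega), sparseSum_insert c (by simp) hsub,
    sparseSum_congr c hmod, sparseSum_congr c fun k hk => hmod k (hsub hk),
    show D c 1 (n + 4) = _ from D_eq_sparseSum c 1 (n + 2),
    show D c 2 (n + 2) = _ from D_eq_sparseSum c 2 n]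
  · push_cast; rfl
  intro I hI
  have hbound : ∀ k ∈ I, 1 ≤ k ∧ k < n + 3 := fun k hk => Finset.mem_Ico.1 (hI hk)
  rw [isSparse_insert_iff, Nat.mod_self, zero_add]
  constructor
  · rintro ⟨-, h1, hx, hsp⟩
    refine ⟨fun k hk => ?_, hsp⟩
    have hk' := hbound k hk
    have hkx := hx k hk
    rw [Nat.mod_eq_of_lt hk'.2] at hkx
    have : k ≠ 1 := fun h => h1 (h ▸ hk)
    rw [Finset.mem_Ico]
    omega
  · rintro ⟨ht, hsp⟩
    refine ⟨by omega, fun h => by have := Finset.mem_Ico.1 (ht h); omega, fun k hk => ?_, hsp⟩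
    have := Finset.mem_Ico.1 (ht hk)
    rw [Nat.mod_eq_of_lt (by omega)]
    omega

theorem stmt7_general (c : ℤ → ℂ) (n : ℕ) (hn : 4 ≤ n)
    (hD : ∀ i : ℤ, D c i n = 0) :
    ∀ i : ℤ, D c i (n + 2) = D c i (n + 1) ∧
      D c i (n + 1) =
        (1 / 2) * ∑ I ∈ (Finset.Icc 1 n).powerset.filter
            (fun I => ∀ k ∈ I, (k % n + 1) ∉ I),
          (-1 : ℂ) ^ I.card * ∏ k ∈ I, c (k : ℤ) := by
  obtain ⟨m, rfl⟩ : ∃ m, n = m + 3 := ⟨n - 3, by omega⟩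
  have hnext : ∀ i : ℤ, D c i (m + 5) = D c i (m + 4) := fun i => by
    rw [D_add_three c i (m + 2), hD, mul_zero, sub_zero]
  have hshift : Function.Periodic (fun i => D c i (m + 4)) 1 := fun i => by
    dsimp only
    rw [← hnext i, D_add_two_eq_left c (m + 3) i, hD, mul_zero, sub_zero]
  have hconst : ∀ i : ℤ, D c i (m + 4) = D c 0 (m + 4) := fun i => by
    simpa using hshift.int_mul_eq i
  have hcyc : sparseSum (fun k => k % (m + 3) + 1) c (Finset.Icc 1 (m + 3)) =
      2 * D c 0 (m + 4) := by
    have h2 : D c 2 (m + 4) = -c (m + 3) * D c 2 (m + 2) := by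
      rw [D_add_three c 2 (m + 1), hD]
      push_cast
      ring_nf
    rw [sparseSum_cyclic_eq]
    linear_combination hconst 1 + hconst 2 - h2
  intro i
  refine ⟨hnext i, ?_⟩
  change _ = 1 / 2 * sparseSum (fun k => k % (m + 3) + 1) c (Finset.Icc 1 (m + 3))
  rw [hcyc, hconst i]
  ring

/-- If the `n`-periodic sequence `c` satisfies `D_{i,n-3+i} = 0` for all `i`,
then `D_{i,n-1+i} = D_{i,n-2+i}` (lengths `n+2` and `n+1`), and the common
value is half the cyclically sparse alternating sum `(1/2) Σ (-1)^{|I|} c_I`. -/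
theorem stmt7 (c : ℤ → ℂ) (n : ℕ) (hn : 4 ≤ n)
    (hper : ∀ i : ℤ, c (i + n) = c i)
    (hD : ∀ i : ℤ, D c i n = 0) :
    ∀ i : ℤ, D c i (n + 2) = D c i (n + 1) ∧
      D c i (n + 1) =
        (1 / 2) * ∑ I ∈ (Finset.Icc 1 n).powerset.filter
            (fun I => ∀ k ∈ I, (k % n + 1) ∉ I),
          (-1 : ℂ) ^ I.card * ∏ k ∈ I, c (k : ℤ) :=
  stmt7_general c n hn hD
end

section
/- Let (c_i) be an n-periodic sequence satisfying D_{i,n-3+i} = 0 for all i. Then Σ_{k=0}^{⌊n/2⌋} (-1)^k (n - 2k) Σ_{|I|=k, I cyclically sparse} c_I = 0. -/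
/-!
Expanding the recurrence, `D_{i,i+n-3}` is the signed sum of `c_S` over the sparse subsets `S`
of the path `i, …, i+n-3`. Read inside `ℤ/n`, the path starting at `a + 2` is the cycle with
the vertices `a, a+1` removed, so summing the hypothesis over all `n` residues `a` counts
each cyclically sparse `I` once for every `a` with `a, a+1 ∉ I`. Since `I` and `I - 1` are
disjoint, there are exactly `n - 2|I|` such `a`.
-/

open Finset

def sparseSubsets (m : ℕ) : Finset (Finset ℕ) :=
  (range m).powerset.filter fun S => ∀ j ∈ S, j + 1 ∉ S

theorem mem_sparseSubsets {m : ℕ} {S : Finset ℕ} :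
    S ∈ sparseSubsets m ↔ S ⊆ range m ∧ ∀ j ∈ S, j + 1 ∉ S := by
  rw [sparseSubsets, mem_filter, mem_powerset]

theorem sum_sparseSubsets_add_two {M : Type*} [AddCommMonoid M] (m : ℕ) (g : Finset ℕ → M) :
    ∑ S ∈ sparseSubsets (m + 2), g S =
      ∑ S ∈ sparseSubsets (m + 1), g S + ∑ S ∈ sparseSubsets m, g (insert (m + 1) S) := by
  have hnot : {S ∈ sparseSubsets (m + 2) | m + 1 ∉ S} = sparseSubsets (m + 1) := by
    ext S
    simp only [mem_filter, mem_sparseSubsets, subset_iff, mem_range]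
    grind
  have hmem : {S ∈ sparseSubsets (m + 2) | m + 1 ∈ S} =
      (sparseSubsets m).image (insert (m + 1)) := by
    ext T
    simp only [mem_filter, mem_image, mem_sparseSubsets, subset_iff, mem_range]
    constructor
    · rintro ⟨⟨hT, hsp⟩, hm⟩
      exact ⟨T.erase (m + 1), ⟨by grind, by grind⟩, insert_erase hm⟩
    · rintro ⟨S, ⟨hS, hsp⟩, rfl⟩
      grind
  have hinj : Set.InjOn (insert (m + 1)) (sparseSubsets m : Set (Finset ℕ)) := by
    intro S hS T hT h
    have hS' : m + 1 ∉ S := fun h => by simpa using (mem_sparseSubsets.1 hS).1 h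
    have hT' : m + 1 ∉ T := fun h => by simpa using (mem_sparseSubsets.1 hT).1 h
    rw [← erase_insert hS', ← erase_insert hT', h]
  rw [← sum_filter_add_sum_filter_not _ (fun S => m + 1 ∉ S), hnot]
  simp only [not_not]
  rw [hmem, sum_image hinj]

theorem D_add_two_eq_sum (c : ℤ → ℂ) (i : ℤ) (m : ℕ) :
    D c i (m + 2) = ∑ S ∈ sparseSubsets m, (-1) ^ #S * ∏ j ∈ S, c (i + j) := by
  induction m using Nat.twoStepInduction with
  | zero => simp [D, show sparseSubsets 0 = {∅} by decide]
  | one =>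
    rw [show sparseSubsets 1 = {∅, {0}} by decide, sum_pair (by decide)]
    simp [D, sub_eq_add_neg]
  | more m ih₀ ih₁ =>
    have hrec : D c i (m + 2 + 2) = D c i (m + 1 + 2) - c (i + (m + 1 : ℕ)) * D c i (m + 2) := rfl
    rw [hrec, ih₀, ih₁, sum_sparseSubsets_add_two, mul_sum, sub_eq_add_neg, ← sum_neg_distrib]
    congr 1
    refine sum_congr rfl fun S hS => ?_
    have hm : m + 1 ∉ S := fun h => by simpa using (mem_sparseSubsets.1 hS).1 h
    rw [card_insert_of_notMem hm, prod_insert hm]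
    ring

theorem card_filter_notMem_and_add_notMem_add_two_mul_card {G : Type*} [AddGroup G] [Fintype G]
    [DecidableEq G] {g : G} {J : Finset G} (hJ : ∀ x ∈ J, x + g ∉ J) :
    #{a | a ∉ J ∧ a + g ∉ J} + 2 * #J = Fintype.card G := by
  have hcompl : univ.filter (fun a => ¬(a ∉ J ∧ a + g ∉ J)) =
      J ∪ J.map (Equiv.subRight g).toEmbedding := by
    ext a
    simp [or_iff_not_imp_left]
  have hdisj : Disjoint J (J.map (Equiv.subRight g).toEmbedding) := by
    rw [disjoint_left]
    intro a ha ha'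
    obtain ⟨b, hb, rfl⟩ := mem_map.1 ha'
    exact absurd hb (by simpa using hJ _ ha)
  have := card_filter_add_card_filter_not (s := univ) (fun a => a ∉ J ∧ a + g ∉ J)
  rw [hcompl, card_union_of_disjoint hdisj, card_map, card_univ] at this
  omega

def cyclicallySparse (n : ℕ) [NeZero n] : Finset (Finset (ZMod n)) :=
  univ.filter fun J => ∀ x ∈ J, x + 1 ∉ J

theorem ZMod.natCast_eq_natCast_iff_of_lt {n j k : ℕ} (hj : j < n) (hk : k < n) :
    (j : ZMod n) = k ↔ j = k := by
  rw [ZMod.natCast_eq_natCast_iff', Nat.mod_eq_of_lt hj, Nat.mod_eq_of_lt hk]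

section cyclic

variable {n : ℕ} [NeZero n]

theorem mem_cyclicallySparse {J : Finset (ZMod n)} :
    J ∈ cyclicallySparse n ↔ ∀ x ∈ J, x + 1 ∉ J := by
  simp [cyclicallySparse]

theorem two_mul_card_le_of_mem_cyclicallySparse {J : Finset (ZMod n)}
    (hJ : J ∈ cyclicallySparse n) : 2 * #J ≤ n := by
  have := card_filter_notMem_and_add_notMem_add_two_mul_card (mem_cyclicallySparse.1 hJ)
  rw [ZMod.card] at this
  omega

theorem image_mem_filter_cyclicallySparse (a : ZMod n) {S : Finset ℕ}
    (hS : S ∈ sparseSubsets (n - 2)) :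
    S.image (fun j : ℕ => a + 2 + j) ∈
      {J ∈ cyclicallySparse n | a ∉ J ∧ a + 1 ∉ J} := by
  obtain ⟨hS, hsp⟩ := mem_sparseSubsets.1 hS
  have hlt : ∀ j ∈ S, j + 2 < n := fun j hj => by have := mem_range.1 (hS hj); omega
  simp only [mem_filter, mem_cyclicallySparse, mem_image, not_exists, not_and]
  refine ⟨?_, fun j hj h => ?_, fun j hj h => ?_⟩
  · rintro _ ⟨j, hj, rfl⟩ k hk h
    have hkj : (k : ZMod n) = (j + 1 : ℕ) := by push_cast; linear_combination h
    rw [ZMod.natCast_eq_natCast_iff_of_lt (by grind) (by grind)] at hkj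
    exact hsp j hj (hkj ▸ hk)
  · have hj0 : ((j + 2 : ℕ) : ZMod n) = (0 : ℕ) := by push_cast; linear_combination h
    rw [ZMod.natCast_eq_natCast_iff_of_lt (hlt j hj) (NeZero.pos n)] at hj0
    omega
  · have hj0 : ((j + 1 : ℕ) : ZMod n) = (0 : ℕ) := by push_cast; linear_combination h
    rw [ZMod.natCast_eq_natCast_iff_of_lt (by grind) (NeZero.pos n)] at hj0
    omega

theorem exists_mem_sparseSubsets_image_eq {a : ZMod n} {J : Finset (ZMod n)}
    (hJ : J ∈ cyclicallySparse n) (ha : a ∉ J) (ha1 : a + 1 ∉ J) :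
    ∃ S ∈ sparseSubsets (n - 2), S.image (fun j : ℕ => a + 2 + j) = J := by
  refine ⟨(range (n - 2)).filter fun j => a + 2 + j ∈ J,
    mem_sparseSubsets.2 ⟨filter_subset _ _, ?_⟩, ?_⟩
  · simp only [mem_filter, mem_range, not_and]
    intro j hj _ hj1
    push_cast at hj1
    exact mem_cyclicallySparse.1 hJ _ hj.2 (by simpa [add_assoc] using hj1)
  · ext x
    simp only [mem_image, mem_filter, mem_range]
    refine ⟨by rintro ⟨j, ⟨-, hj⟩, rfl⟩; exact hj, fun hx => ?_⟩
    obtain ⟨j, hjn, rfl⟩ : ∃ j : ℕ, j < n ∧ a + 2 + (j : ZMod n) = x :=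
      ⟨(x - (a + 2)).val, ZMod.val_lt _, by simp⟩
    refine ⟨j, ⟨?_, hx⟩, rfl⟩
    rcases (by omega : j < n - 2 ∨ j + 2 = n ∨ j + 1 = n) with h | h | h
    · exact h
    · have hj : ((j + 2 : ℕ) : ZMod n) = 0 := by rw [h, ZMod.natCast_self]
      push_cast at hj
      exact (ha (by rwa [show a + 2 + (j : ZMod n) = a by linear_combination hj] at hx)).elim
    · have hj : ((j + 1 : ℕ) : ZMod n) = 0 := by rw [h, ZMod.natCast_self]
      push_cast at hj
      exact (ha1 (by rwa [show a + 2 + (j : ZMod n) = a + 1 by linear_combination hj] at hx)).elim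

theorem image_sparseSubsets_eq_filter_cyclicallySparse (a : ZMod n) :
    (sparseSubsets (n - 2)).image (·.image fun j : ℕ => a + 2 + j) =
      {J ∈ cyclicallySparse n | a ∉ J ∧ a + 1 ∉ J} := by
  refine Subset.antisymm (fun J hJ => ?_) fun J hJ => ?_
  · obtain ⟨S, hS, rfl⟩ := mem_image.1 hJ
    exact image_mem_filter_cyclicallySparse a hS
  · obtain ⟨hJ, ha, ha1⟩ := mem_filter.1 hJ
    exact mem_image.2 (exists_mem_sparseSubsets_image_eq hJ ha ha1)

theorem sum_sparseSubsets_eq_sum_filter_cyclicallySparse {R : Type*} [CommRing R]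
    (f : ZMod n → R) (a : ZMod n) :
    ∑ S ∈ sparseSubsets (n - 2), (-1) ^ #S * ∏ j ∈ S, f (a + 2 + j) =
      ∑ J ∈ cyclicallySparse n with a ∉ J ∧ a + 1 ∉ J, (-1) ^ #J * ∏ x ∈ J, f x := by
  have hinj : Set.InjOn (fun j : ℕ => a + 2 + (j : ZMod n)) (range (n - 2)) := by
    intro j hj k hk h
    simp only [coe_range, Set.mem_Iio] at hj hk
    exact (ZMod.natCast_eq_natCast_iff_of_lt (by omega) (by omega)).1 (add_left_cancel h)
  have hinjS : ∀ S ∈ sparseSubsets (n - 2), Set.InjOn (fun j : ℕ => a + 2 + (j : ZMod n)) S :=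
    fun S hS => hinj.mono (mem_sparseSubsets.1 hS).1
  rw [← image_sparseSubsets_eq_filter_cyclicallySparse a, sum_image]
  · refine sum_congr rfl fun S hS => ?_
    rw [card_image_of_injOn (hinjS S hS), prod_image (hinjS S hS)]
  · exact (image_injOn_powerset_of_injOn hinj).mono
      fun S hS => mem_powerset.2 (mem_sparseSubsets.1 hS).1

theorem sum_sum_sparseSubsets_eq_sum_cyclicallySparse {R : Type*} [CommRing R]
    (f : ZMod n → R) :
    ∑ a : ZMod n, ∑ S ∈ sparseSubsets (n - 2), (-1) ^ #S * ∏ j ∈ S, f (a + 2 + j) =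
      ∑ J ∈ cyclicallySparse n, ((n : R) - 2 * #J) * ((-1) ^ #J * ∏ x ∈ J, f x) := by
  simp_rw [sum_sparseSubsets_eq_sum_filter_cyclicallySparse]
  rw [sum_comm' (t' := cyclicallySparse n) (s' := fun J => {a | a ∉ J ∧ a + 1 ∉ J})
    fun _ _ => by simp [and_comm]]
  refine sum_congr rfl fun J hJ => ?_
  have hcount := card_filter_notMem_and_add_notMem_add_two_mul_card (mem_cyclicallySparse.1 hJ)
  rw [ZMod.card] at hcount
  have hcard : (#{a | a ∉ J ∧ a + 1 ∉ J} : R) = n - 2 * #J := by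
    rw [eq_sub_iff_add_eq]
    have := congrArg (Nat.cast : ℕ → R) hcount
    push_cast at this
    exact this
  rw [sum_const, nsmul_eq_mul, hcard]

end cyclic

namespace ZMod

variable {n : ℕ} [NeZero n]

/-- The representative of `x` in `{1, …, n}` (so `0` is represented by `n`). -/
def reprIcc (x : ZMod n) : ℕ := (x - 1).val + 1

@[simp]
theorem natCast_reprIcc (x : ZMod n) : (x.reprIcc : ZMod n) = x := by
  simp [reprIcc]

theorem reprIcc_injective : Function.Injective (reprIcc : ZMod n → ℕ) :=
  Function.LeftInverse.injective natCast_reprIcc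

theorem image_reprIcc_univ : univ.image (reprIcc : ZMod n → ℕ) = Icc 1 n := by
  refine eq_of_subset_of_card_le (fun _ hj => ?_) ?_
  · obtain ⟨x, -, rfl⟩ := mem_image.1 hj
    have := (x - 1).val_lt
    rw [mem_Icc, reprIcc]
    omega
  · rw [card_image_of_injective _ reprIcc_injective, card_univ, ZMod.card, Nat.card_Icc]
    omega

theorem reprIcc_mod_add_one (x : ZMod n) : x.reprIcc % n + 1 = (x + 1).reprIcc := by
  rw [← ZMod.val_natCast, natCast_reprIcc, reprIcc, add_sub_cancel_right]

end ZMod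

open ZMod in
theorem filter_powerset_Icc_eq_image {n : ℕ} [NeZero n] (k : ℕ) :
    (Icc 1 n).powerset.filter (fun I => (∀ j ∈ I, j % n + 1 ∉ I) ∧ #I = k) =
      {J ∈ cyclicallySparse n | #J = k}.image (·.image reprIcc) := by
  rw [← image_reprIcc_univ, powerset_image, powerset_univ, filter_image]
  congr 1
  ext J
  simp only [mem_filter, mem_univ, true_and, mem_cyclicallySparse,
    card_image_of_injective _ reprIcc_injective, forall_mem_image, reprIcc_mod_add_one,
    reprIcc_injective.mem_finset_image]

open ZMod in
theorem sum_filter_powerset_Icc_prod_eq {R : Type*} [CommSemiring R] {n : ℕ} [NeZero n]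
    (g : ℕ → R) (k : ℕ) :
    ∑ I ∈ (Icc 1 n).powerset.filter (fun I => (∀ j ∈ I, j % n + 1 ∉ I) ∧ #I = k),
      ∏ j ∈ I, g j =
      ∑ J ∈ cyclicallySparse n with #J = k, ∏ x ∈ J, g x.reprIcc := by
  rw [filter_powerset_Icc_eq_image, sum_image (image_injective reprIcc_injective).injOn]
  exact sum_congr rfl fun J _ => prod_image reprIcc_injective.injOn

theorem Function.Periodic.apply_eq_of_cast_eq {β : Type*} {c : ℤ → β} {n : ℕ}
    (hc : Function.Periodic c n) {a b : ℤ} (h : (a : ZMod n) = b) : c a = c b := by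
  obtain ⟨k, hk⟩ := (ZMod.intCast_eq_intCast_iff_dvd_sub a b n).1 h
  rw [show b = a + k * n by linear_combination hk]
  simpa using (hc.int_mul k a).symm

theorem D_reprIcc_add_two_eq_sum {c : ℤ → ℂ} {n : ℕ} [NeZero n] (hc : Function.Periodic c n)
    (hn : 2 ≤ n) (a : ZMod n) :
    D c (a.reprIcc + 2) n =
      ∑ S ∈ sparseSubsets (n - 2), (-1) ^ #S * ∏ j ∈ S, c (a + 2 + j).reprIcc := by
  have h := D_add_two_eq_sum c (a.reprIcc + 2) (n - 2)
  rw [Nat.sub_add_cancel hn] at h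
  rw [h]
  refine sum_congr rfl fun S _ => congrArg _ (prod_congr rfl fun j _ => ?_)
  exact hc.apply_eq_of_cast_eq (by simp)

/-- If the `n`-periodic sequence `c` satisfies `D_{i,n-3+i} = 0` for all `i`,
then `Σ_{k=0}^{⌊n/2⌋} (-1)^k (n-2k) F_k = 0`, where `F_k` is the sum of `c_I`
over cyclically sparse subsets `I ⊆ {1,…,n}` of size `k`. -/
theorem stmt8 (c : ℤ → ℂ) (n : ℕ) (hn : 4 ≤ n)
    (hper : ∀ i : ℤ, c (i + n) = c i)
    (hD : ∀ i : ℤ, D c i n = 0) :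
    ∑ k ∈ Finset.range (n / 2 + 1), (-1 : ℂ) ^ k * ((n : ℂ) - 2 * k) *
      ∑ I ∈ (Finset.Icc 1 n).powerset.filter
          (fun I => (∀ j ∈ I, (j % n + 1) ∉ I) ∧ I.card = k),
        ∏ j ∈ I, c (j : ℤ) = 0 := by
  have : NeZero n := ⟨by omega⟩
  set f : ZMod n → ℂ := fun x => c x.reprIcc
  calc _ = ∑ k ∈ range (n / 2 + 1), ∑ J ∈ cyclicallySparse n with #J = k,
        ((n : ℂ) - 2 * #J) * ((-1) ^ #J * ∏ x ∈ J, f x) := by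
        refine sum_congr rfl fun k _ => ?_
        rw [sum_filter_powerset_Icc_prod_eq, mul_sum]
        refine sum_congr rfl fun J hJ => ?_
        rw [(mem_filter.1 hJ).2]
        ring
    _ = ∑ J ∈ cyclicallySparse n, ((n : ℂ) - 2 * #J) * ((-1) ^ #J * ∏ x ∈ J, f x) :=
        sum_fiberwise_of_maps_to (fun J hJ => mem_range.2 (by
          have := two_mul_card_le_of_mem_cyclicallySparse hJ
          omega)) _
    _ = ∑ a : ZMod n, ∑ S ∈ sparseSubsets (n - 2), (-1) ^ #S * ∏ j ∈ S, f (a + 2 + j) :=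
        (sum_sum_sparseSubsets_eq_sum_cyclicallySparse f).symm
    _ = 0 := sum_eq_zero fun a _ =>
        (D_reprIcc_add_two_eq_sum hper (by omega) a).symm.trans (hD _)
end

section
/- Suppose five numbers c_1,...,c_5 satisfy c_{i-1} + c_i + c_{i+1} = 1 + c_{i-1}c_{i+1} for all i (indices mod 5). Then (c_1 + c_2 + c_3 + c_4 + c_5 - 2)² = c_1 c_2 c_3 c_4 c_5. -/
/-- Gauss's pentagramma mirificum identity: if `c_{i-1} + c_i + c_{i+1} =
1 + c_{i-1} c_{i+1}` for all `i` mod 5, then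
`(c₁ + c₂ + c₃ + c₄ + c₅ - 2)² = c₁c₂c₃c₄c₅`. -/
theorem stmt9 (c : ZMod 5 → ℂ)
    (h : ∀ i : ZMod 5, c (i - 1) + c i + c (i + 1) = 1 + c (i - 1) * c (i + 1)) :
    (c 0 + c 1 + c 2 + c 3 + c 4 - 2) ^ 2 = c 0 * c 1 * c 2 * c 3 * c 4 := by
  have h0 : c 4 + c 0 + c 1 = 1 + c 4 * c 1 := h 0
  have h1 : c 0 + c 1 + c 2 = 1 + c 0 * c 2 := h 1
  have h2 : c 1 + c 2 + c 3 = 1 + c 1 * c 3 := h 2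
  have h3 : c 2 + c 3 + c 4 = 1 + c 2 * c 4 := h 3
  have h4 : c 3 + c 4 + c 0 = 1 + c 3 * c 0 := h 4
  set x2 := 1 - c 1 with hx2
  set x4 := 1 - c 3 with hx4
  set x5 := 1 - c 4 with hx5
  set f1 := 1 + c 4 * c 1 - c 4 - c 0 - c 1 with hf1
  set f2 := 1 + c 0 * c 2 - c 0 - c 1 - c 2 with hf2
  set f3 := 1 + c 1 * c 3 - c 1 - c 2 - c 3 with hf3
  set f4 := 1 + c 2 * c 4 - c 2 - c 3 - c 4 with hf4
  set F := f2 * (x2 * x4 * x5) + f3 * (x5 - x2 * x5 - 1) + f4 * (x2 - 1) - f1 with hF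
  set M := 2 * (2 - (c 0 + c 1 + c 2 + c 3 + c 4)) + F with hM
  set A2 := (1 - c 0) * (1 - c 2) with hA2
  set A3 := (1 - c 1) * (1 - c 3) with hA3
  set A4 := (1 - c 2) * (1 - c 4) with hA4
  set A5 := (1 - c 3) * (1 - c 0) with hA5
  linear_combination (-M - A2 * A3 * A4 * A5) * h0
    + (x2 * x4 * x5 * M - c 0 * (A3 * A4 * A5)) * h1
    + ((x5 - x2 * x5 - 1) * M - c 0 * c 1 * (A4 * A5)) * h2
    + ((x2 - 1) * M - c 0 * c 1 * c 2 * A5) * h3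
    + (- (c 0 * c 1 * c 2 * c 3)) * h4
end

section
/- Suppose [p_i, p_{i+1}, q_i, q_{i+1}] = α for all i (the α-relation between sequences p and q), where [z1,z2,z3,z4] = ((z1-z3)(z2-z4))/((z1-z4)(z2-z3)). Define x_i = [p_i, p_{i+1}, p_{i-1}, q_i], y_i = [q_i, q_{i+1}, q_{i-1}, p_i], c_i = [p_i,p_{i+1},p_{i-1},p_{i+2}], d_i = [q_i,q_{i+1},q_{i-1},q_{i+2}]. Then c_i = α x_i (1 - x_{i+1}), d_i = α y_i (1 - y_{i+1}), and x_i + y_i = 1. -/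
/-- The cross-ratio `[z₁,z₂,z₃,z₄] = ((z₁-z₃)(z₂-z₄))/((z₁-z₄)(z₂-z₃))`. -/
noncomputable def crossRatio (z1 z2 z3 z4 : ℂ) : ℂ :=
  ((z1 - z3) * (z2 - z4)) / ((z1 - z4) * (z2 - z3))

set_option maxHeartbeats 1600000 in
/-- If `[p_i, p_{i+1}, q_i, q_{i+1}] = α` for all `i`, then with
`x_i = [p_i,p_{i+1},p_{i-1},q_i]`, `y_i = [q_i,q_{i+1},q_{i-1},p_i]`,
`c_i = [p_i,p_{i+1},p_{i-1},p_{i+2}]`, `d_i = [q_i,q_{i+1},q_{i-1},q_{i+2}]`,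
one has `c_i = α x_i (1 - x_{i+1})`, `d_i = α y_i (1 - y_{i+1})`,
and `x_i + y_i = 1`. -/
theorem stmt15 (p q : ℤ → ℂ) (alpha : ℂ) (h0 : alpha ≠ 0) (h1 : alpha ≠ 1)
    (hp1 : ∀ i : ℤ, p i ≠ p (i + 1)) (hp2 : ∀ i : ℤ, p i ≠ p (i + 2))
    (hq1 : ∀ i : ℤ, q i ≠ q (i + 1)) (hq2 : ∀ i : ℤ, q i ≠ q (i + 2))
    (hpq : ∀ i : ℤ, p i ≠ q i) (hpq1 : ∀ i : ℤ, p i ≠ q (i + 1))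
    (hp1q : ∀ i : ℤ, p (i + 1) ≠ q i)
    (hrel : ∀ i : ℤ, crossRatio (p i) (p (i + 1)) (q i) (q (i + 1)) = alpha)
    (x y c d : ℤ → ℂ)
    (hx : ∀ i : ℤ, x i = crossRatio (p i) (p (i + 1)) (p (i - 1)) (q i))
    (hy : ∀ i : ℤ, y i = crossRatio (q i) (q (i + 1)) (q (i - 1)) (p i))
    (hc : ∀ i : ℤ, c i = crossRatio (p i) (p (i + 1)) (p (i - 1)) (p (i + 2)))
    (hd : ∀ i : ℤ, d i = crossRatio (q i) (q (i + 1)) (q (i - 1)) (q (i + 2))) :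
    ∀ i : ℤ, c i = alpha * x i * (1 - x (i + 1)) ∧
      d i = alpha * y i * (1 - y (i + 1)) ∧
      x i + y i = 1 := by
  intro i
  -- basic nonvanishing facts
  have n1 : p i - p (i + 2) ≠ 0 := sub_ne_zero.2 (hp2 i)
  have n2 : p (i + 1) - p (i - 1) ≠ 0 := by
    have := hp2 (i - 1); rw [show i - 1 + 2 = i + 1 by ring] at this
    exact sub_ne_zero.2 (Ne.symm this)
  have n2' : p (i - 1) - p (i + 1) ≠ 0 := by
    have := hp2 (i - 1); rw [show i - 1 + 2 = i + 1 by ring] at this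
    exact sub_ne_zero.2 this
  have n3 : p i - q i ≠ 0 := sub_ne_zero.2 (hpq i)
  have n4 : p (i + 1) - q i ≠ 0 := sub_ne_zero.2 (hp1q i)
  have n5 : p i - q (i + 1) ≠ 0 := sub_ne_zero.2 (hpq1 i)
  have n6 : p (i + 1) - q (i + 1) ≠ 0 := sub_ne_zero.2 (hpq (i + 1))
  have n7 : p (i + 2) - p i ≠ 0 := fun h => n1 (by linear_combination -h)
  have m1 : q i - q (i + 2) ≠ 0 := sub_ne_zero.2 (hq2 i)
  have m2 : q (i + 1) - q (i - 1) ≠ 0 := by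
    have := hq2 (i - 1); rw [show i - 1 + 2 = i + 1 by ring] at this
    exact sub_ne_zero.2 (Ne.symm this)
  have m3 : q i - p i ≠ 0 := fun h => n3 (by linear_combination -h)
  have m6 : q (i + 1) - p (i + 1) ≠ 0 := fun h => n6 (by linear_combination -h)
  have m7 : q (i + 2) - q i ≠ 0 := fun h => m1 (by linear_combination -h)
  have na : p (i - 1) - q i ≠ 0 := by
    have := hpq1 (i - 1); rw [show i - 1 + 1 = i by ring] at this
    exact sub_ne_zero.2 this
  have nb : p i - q (i - 1) ≠ 0 := by
    have := hp1q (i - 1); rw [show i - 1 + 1 = i by ring] at this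
    exact sub_ne_zero.2 this
  -- the polynomial forms of the cross-ratio relation at i-1 and i
  have hb := hrel i
  have ha := hrel (i - 1)
  rw [show i - 1 + 1 = i by ring] at ha
  have k1 : (p (i - 1) - q (i - 1)) * (p i - q i)
      = alpha * ((p (i - 1) - q i) * (p i - q (i - 1))) := by
    rw [crossRatio, div_eq_iff (mul_ne_zero na nb)] at ha
    linear_combination ha
  have k2 : (p i - q i) * (p (i + 1) - q (i + 1))
      = alpha * ((p i - q (i + 1)) * (p (i + 1) - q i)) := by
    rw [crossRatio, div_eq_iff (mul_ne_zero n5 n4)] at hb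
    linear_combination hb
  -- alternate formula for y i
  have hy2 : y i = ((p i - p (i + 1)) * (p (i - 1) - q i)) /
      ((p i - q i) * (p (i - 1) - p (i + 1))) := by
    rw [hy, crossRatio, div_eq_div_iff (mul_ne_zero m3 m2) (mul_ne_zero n3 n2')]
    linear_combination (p i - q (i + 1)) * (p (i + 1) - q i) * k1 -
      (p (i - 1) - q i) * (p i - q (i - 1)) * k2
  refine ⟨?_, ?_, ?_⟩
  · rw [hc i, hx i, hx (i + 1), ← hb,
      show i + 1 + 1 = i + 2 by ring, show i + 1 - 1 = i by ring]
    simp only [crossRatio]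
    field_simp
    ring
  · rw [hd i, hy i, hy (i + 1), ← hb,
      show i + 1 + 1 = i + 2 by ring, show i + 1 - 1 = i by ring]
    simp only [crossRatio]
    field_simp
    ring
  · rw [hx i, hy2, crossRatio]
    field_simp
    ring
end

section
/- The vector field ν = K·u - 2J·v + I·w annihilates the functions I, J, K, where I = Σ 1/(p_i - p_{i+1}), J = (1/2) Σ (p_i + p_{i+1})/(p_i - p_{i+1}), K = Σ p_i p_{i+1}/(p_i - p_{i+1}), and u = Σ ∂/∂p_i, v = Σ p_i ∂/∂p_i, w = Σ p_i² ∂/∂p_i. Equivalently: u(I)=0, u(J)=I, u(K)=2J; v(I)=-I, v(J)=0, v(K)=K; w(I)=-2J, w(J)=-K, w(K)=0; hence ν(I)=ν(J)=ν(K)=0. -/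
/-- `I(P) = Σ 1/(p_i - p_{i+1})`. -/
noncomputable def Ifun (n : ℕ) [NeZero n] (p : ZMod n → ℂ) : ℂ :=
  ∑ i : ZMod n, 1 / (p i - p (i + 1))

/-- `J(P) = (1/2) Σ (p_i + p_{i+1})/(p_i - p_{i+1})`. -/
noncomputable def Jfun (n : ℕ) [NeZero n] (p : ZMod n → ℂ) : ℂ :=
  (1 / 2) * ∑ i : ZMod n, (p i + p (i + 1)) / (p i - p (i + 1))

/-- `K(P) = Σ p_i p_{i+1}/(p_i - p_{i+1})`. -/
noncomputable def Kfun (n : ℕ) [NeZero n] (p : ZMod n → ℂ) : ℂ :=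
  ∑ i : ZMod n, p i * p (i + 1) / (p i - p (i + 1))

/-- Directional derivative of a function `F` of the polygon at `p` in the
direction of the vector field `w`: `d/dt F(p + t w)|₀`. -/
noncomputable def dirDeriv (n : ℕ) [NeZero n] (F : (ZMod n → ℂ) → ℂ)
    (p w : ZMod n → ℂ) : ℂ :=
  deriv (fun t : ℂ => F (fun i => p i + t * w i)) 0


/-!
Each of `I`, `J`, `K` is a sum over the edges `(a, b) = (p i, p (i+1))` of a term
`c(a, b)/(a - b)`. Along a quadratic vector field `q z = α + β z + γ z²` one has
`q a - q b = (a - b)(β + γ(a + b))`, `a q b - b q a = (a - b)(α - γ a b)` and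
`a² q b - b² q a = (a - b)(α(a + b) + β a b)`, so the derivative of each edge term is again a
combination of edge terms: `q(I) = -β I - 2γ J`, `q(J) = α I - γ K`, `q(K) = 2α J + β K`.
The theorem is the case `(α, β, γ) = (1,0,0), (0,1,0), (0,0,1), (K, -2J, I)`.
-/

open Finset

section Edge

variable {a b : ℂ}

theorem hasDerivAt_add_mul (a x : ℂ) : HasDerivAt (fun t : ℂ => a + t * x) x 0 := by
  simpa using ((hasDerivAt_id (0 : ℂ)).mul_const x).const_add a

theorem hasDerivAt_div_edge {f : ℂ → ℂ} {f' x y : ℂ} (hf : HasDerivAt f f' 0)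
    (hab : a ≠ b) :
    HasDerivAt (fun t => f t / (a + t * x - (b + t * y)))
      ((f' * (a - b) - f 0 * (x - y)) / (a - b) ^ 2) 0 := by
  have h := hf.fun_div ((hasDerivAt_add_mul a x).fun_sub (hasDerivAt_add_mul b y))
    (by simpa using sub_ne_zero.mpr hab)
  simpa using h

variable (α β γ : ℂ)

theorem hasDerivAt_one_div_edge (hab : a ≠ b) :
    HasDerivAt
      (fun t => 1 / (a + t * (α + β * a + γ * a ^ 2) - (b + t * (α + β * b + γ * b ^ 2))))
      (-β * (1 / (a - b)) - γ * ((a + b) / (a - b))) 0 := by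
  refine (hasDerivAt_div_edge (hasDerivAt_const 0 1) hab).congr_deriv ?_
  have := sub_ne_zero.mpr hab
  field_simp
  ring

theorem hasDerivAt_add_div_edge (hab : a ≠ b) :
    HasDerivAt
      (fun t => (a + t * (α + β * a + γ * a ^ 2) + (b + t * (α + β * b + γ * b ^ 2))) /
        (a + t * (α + β * a + γ * a ^ 2) - (b + t * (α + β * b + γ * b ^ 2))))
      (2 * α * (1 / (a - b)) - 2 * γ * (a * b / (a - b))) 0 := by
  refine (hasDerivAt_div_edge
    ((hasDerivAt_add_mul _ _).fun_add (hasDerivAt_add_mul _ _)) hab).congr_deriv ?_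
  have := sub_ne_zero.mpr hab
  field_simp
  ring

theorem hasDerivAt_mul_div_edge (hab : a ≠ b) :
    HasDerivAt
      (fun t => (a + t * (α + β * a + γ * a ^ 2)) * (b + t * (α + β * b + γ * b ^ 2)) /
        (a + t * (α + β * a + γ * a ^ 2) - (b + t * (α + β * b + γ * b ^ 2))))
      (α * ((a + b) / (a - b)) + β * (a * b / (a - b))) 0 := by
  refine (hasDerivAt_div_edge
    ((hasDerivAt_add_mul _ _).fun_mul (hasDerivAt_add_mul _ _)) hab).congr_deriv ?_
  have := sub_ne_zero.mpr hab
  field_simp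
  ring

end Edge

section Quadratic

variable {n : ℕ} [NeZero n] {p w : ZMod n → ℂ} {α β γ : ℂ}

theorem dirDeriv_Ifun_of_quadratic (hp : ∀ i, p i ≠ p (i + 1))
    (hw : ∀ i, w i = α + β * p i + γ * p i ^ 2) :
    dirDeriv n (Ifun n) p w = -β * Ifun n p - 2 * γ * Jfun n p := by
  obtain rfl : w = _ := funext hw
  refine (HasDerivAt.fun_sum fun i _ => hasDerivAt_one_div_edge α β γ (hp i)).deriv.trans ?_
  rw [sum_sub_distrib, ← mul_sum, ← mul_sum, Ifun, Jfun]
  ring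

theorem dirDeriv_Jfun_of_quadratic (hp : ∀ i, p i ≠ p (i + 1))
    (hw : ∀ i, w i = α + β * p i + γ * p i ^ 2) :
    dirDeriv n (Jfun n) p w = α * Ifun n p - γ * Kfun n p := by
  obtain rfl : w = _ := funext hw
  refine ((HasDerivAt.fun_sum fun i _ =>
    hasDerivAt_add_div_edge α β γ (hp i)).const_mul (1 / 2)).deriv.trans ?_
  rw [sum_sub_distrib, ← mul_sum, ← mul_sum, Ifun, Kfun]
  ring

theorem dirDeriv_Kfun_of_quadratic (hp : ∀ i, p i ≠ p (i + 1))
    (hw : ∀ i, w i = α + β * p i + γ * p i ^ 2) :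
    dirDeriv n (Kfun n) p w = 2 * α * Jfun n p + β * Kfun n p := by
  obtain rfl : w = _ := funext hw
  refine (HasDerivAt.fun_sum fun i _ => hasDerivAt_mul_div_edge α β γ (hp i)).deriv.trans ?_
  rw [sum_add_distrib, ← mul_sum, ← mul_sum, Jfun, Kfun]
  ring

end Quadratic

/-- `u(I)=0, u(J)=I, u(K)=2J; v(I)=-I, v(J)=0, v(K)=K;
w(I)=-2J, w(J)=-K, w(K)=0`; hence `ν = K u - 2J v + I w` annihilates
`I`, `J`, `K`. -/
theorem stmt17 (n : ℕ) [NeZero n] (p : ZMod n → ℂ)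
    (hp : ∀ i : ZMod n, p i ≠ p (i + 1)) :
    dirDeriv n (Ifun n) p (fun _ => 1) = 0 ∧
    dirDeriv n (Jfun n) p (fun _ => 1) = Ifun n p ∧
    dirDeriv n (Kfun n) p (fun _ => 1) = 2 * Jfun n p ∧
    dirDeriv n (Ifun n) p p = -(Ifun n p) ∧
    dirDeriv n (Jfun n) p p = 0 ∧
    dirDeriv n (Kfun n) p p = Kfun n p ∧
    dirDeriv n (Ifun n) p (fun i => (p i) ^ 2) = -(2 * Jfun n p) ∧
    dirDeriv n (Jfun n) p (fun i => (p i) ^ 2) = -(Kfun n p) ∧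
    dirDeriv n (Kfun n) p (fun i => (p i) ^ 2) = 0 ∧
    dirDeriv n (Ifun n) p
      (fun i => Kfun n p - 2 * Jfun n p * p i + Ifun n p * (p i) ^ 2) = 0 ∧
    dirDeriv n (Jfun n) p
      (fun i => Kfun n p - 2 * Jfun n p * p i + Ifun n p * (p i) ^ 2) = 0 ∧
    dirDeriv n (Kfun n) p
      (fun i => Kfun n p - 2 * Jfun n p * p i + Ifun n p * (p i) ^ 2) = 0 := by
  have quadratic : ∀ α β γ : ℂ, ∀ w : ZMod n → ℂ,
      (∀ i, w i = α + β * p i + γ * p i ^ 2) →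
      dirDeriv n (Ifun n) p w = -β * Ifun n p - 2 * γ * Jfun n p ∧
      dirDeriv n (Jfun n) p w = α * Ifun n p - γ * Kfun n p ∧
      dirDeriv n (Kfun n) p w = 2 * α * Jfun n p + β * Kfun n p := fun _ _ _ _ hw =>
    ⟨dirDeriv_Ifun_of_quadratic hp hw, dirDeriv_Jfun_of_quadratic hp hw,
      dirDeriv_Kfun_of_quadratic hp hw⟩
  obtain ⟨uI, uJ, uK⟩ := quadratic 1 0 0 (fun _ => 1) fun _ => by ring
  obtain ⟨vI, vJ, vK⟩ := quadratic 0 1 0 p fun _ => by ring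
  obtain ⟨wI, wJ, wK⟩ := quadratic 0 0 1 (fun i => p i ^ 2) fun _ => by ring
  obtain ⟨νI, νJ, νK⟩ := quadratic (Kfun n p) (-2 * Jfun n p) (Ifun n p)
    (fun i => Kfun n p - 2 * Jfun n p * p i + Ifun n p * (p i) ^ 2) fun _ => by ring
  exact ⟨by rw [uI]; ring, by rw [uJ]; ring, by rw [uK]; ring,
    by rw [vI]; ring, by rw [vJ]; ring, by rw [vK]; ring,
    by rw [wI]; ring, by rw [wJ]; ring, by rw [wK]; ring,
    by rw [νI]; ring, by rw [νJ]; ring, by rw [νK]; ring⟩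
end
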